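/- arXiv:2509.03160 — 5 statements merged into one kernel-verified Lean document; each statement's English description precedes it below -/
import Mathlib

section
/- Let C ⊆ K be an extension of fields and n a positive integer. For any subset S of Cⁿ, viewed as a subset of Kⁿ, the vanishing ideal of S in K[X₁,…,Xₙ] is equal to the ideal of K[X₁,…,Xₙ] generated by the image of the vanishing ideal of S in C[X₁,…,Xₙ] under the coefficient-inclusion homomorphism C[X₁,…,Xₙ] → K[X₁,…,Xₙ]. In particular, the Zariski closure of S in Kⁿ is defined over C. -/
/-- The zero locus of a set of multivariate polynomials: the set of points at which
every polynomial of the set vanishes. -/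
def zeroLocus {k σ : Type*} [CommSemiring k] (T : Set (MvPolynomial σ k)) :
    Set (σ → k) :=
  {x | ∀ f ∈ T, MvPolynomial.eval x f = 0}

/-- The vanishing ideal of a set of points: the ideal of all polynomials vanishing at
every point of the set. -/
def vanishingIdeal {k σ : Type*} [CommSemiring k] (S : Set (σ → k)) :
    Ideal (MvPolynomial σ k) where
  carrier := {f | ∀ x ∈ S, MvPolynomial.eval x f = 0}
  zero_mem' := by intro x hx; simp
  add_mem' := by
    intro f g hf hg x hx
    simp [map_add, hf x hx, hg x hx]
  smul_mem' := by
    intro c f hf x hx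
    simp [smul_eq_mul, map_mul, hf x hx]




theorem main_lemma
    (K : Type*) [Field K] (C : Subfield K) (n : ℕ)
    (S : Set (Fin n → ↥C)) :
    vanishingIdeal ((fun s : Fin n → ↥C => fun i => ((s i : K))) '' S) =
      Ideal.span ((MvPolynomial.map C.subtype) ''
        ((vanishingIdeal S : Ideal (MvPolynomial (Fin n) ↥C)) : Set (MvPolynomial (Fin n) ↥C))) := by
  apply le_antisymm
  · intro f hf
    -- decompose f along a basis of K over C
    classical
    set b := Module.Basis.ofVectorSpace ↥C K with hb
    -- F i : the polynomial of i-th coordinates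
    set F : (Module.Basis.ofVectorSpaceIndex ↥C K) → MvPolynomial (Fin n) ↥C :=
      fun i => AddMonoidAlgebra.ofCoeff (Finsupp.mapRange (fun a => b.repr a i) (by simp) (AddMonoidAlgebra.coeff f)) with hF
    have coeffF : ∀ i m, MvPolynomial.coeff m (F i) = b.repr (MvPolynomial.coeff m f) i := by
      intro i m; rfl
    set t : Finset (Module.Basis.ofVectorSpaceIndex ↥C K) :=
      f.support.biUnion (fun m => (b.repr (MvPolynomial.coeff m f)).support) with ht
    have key : f = ∑ i ∈ t, MvPolynomial.C (b i : K) * MvPolynomial.map C.subtype (F i) := by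
      apply MvPolynomial.ext
      intro m
      rw [MvPolynomial.coeff_sum]
      simp only [MvPolynomial.coeff_C_mul, MvPolynomial.coeff_map, coeffF]
      by_cases hm : m ∈ f.support
      · have hsub : (b.repr (MvPolynomial.coeff m f)).support ⊆ t :=
          Finset.subset_biUnion_of_mem (fun m => (b.repr (MvPolynomial.coeff m f)).support) hm
        rw [← Finset.sum_subset hsub (by intro i _ hi; simp [Finsupp.notMem_support_iff.mp hi])]
        have htot := b.linearCombination_repr (MvPolynomial.coeff m f)
        rw [Finsupp.linearCombination_apply, Finsupp.sum] at htot
        conv_lhs => rw [← htot]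
        apply Finset.sum_congr rfl
        intro i _
        rw [Subfield.smul_def, smul_eq_mul, mul_comm]
        rfl
      · simp only [MvPolynomial.notMem_support_iff] at hm
        rw [hm]
        simp
    -- each F i vanishes on S
    have hFvan : ∀ i, F i ∈ vanishingIdeal S := by
      intro i s hs
      have hfs : MvPolynomial.eval (fun j => ((s j : K))) f = 0 := hf _ ⟨s, hs, rfl⟩
      have heval : ∀ j, MvPolynomial.eval (fun j => ((s j : K))) (MvPolynomial.map C.subtype (F j)) =
          C.subtype (MvPolynomial.eval s (F j)) := by
        intro j
        rw [MvPolynomial.eval_map]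
        rw [show ((fun j => ((s j : K))) : Fin n → K) = C.subtype ∘ s from rfl]
        have hcl := MvPolynomial.eval₂_comp_left C.subtype (RingHom.id ↥C) s (F j)
        simpa [RingHom.comp_id, MvPolynomial.eval₂_id] using hcl.symm
      have hsum : ∑ j ∈ t, (MvPolynomial.eval s (F j)) • (b j) = 0 := by
        rw [← hfs]
        conv_rhs => rw [key]
        rw [map_sum]
        apply Finset.sum_congr rfl
        intro j _
        rw [map_mul, MvPolynomial.eval_C, heval, Subfield.smul_def, mul_comm]
        rfl
      by_cases hi : i ∈ t
      · exact linearIndependent_iff'.mp b.linearIndependent t _ hsum i hi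
      · -- F i = 0 outside t
        have : F i = 0 := by
          apply MvPolynomial.ext
          intro m
          rw [coeffF]
          by_cases hm : m ∈ f.support
          · by_contra h
            exact hi (Finset.mem_biUnion.mpr ⟨m, hm, Finsupp.mem_support_iff.mpr (by simpa using h)⟩)
          · simp only [MvPolynomial.notMem_support_iff] at hm
            simp [hm]
        rw [this]; simp
    rw [key]
    apply Ideal.sum_mem
    intro i _
    exact Ideal.mul_mem_left _ _ (Ideal.subset_span ⟨F i, hFvan i, rfl⟩)
  · rw [Ideal.span_le]
    rintro _ ⟨g, hg, rfl⟩
    rintro _ ⟨s, hs, rfl⟩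
    rw [MvPolynomial.eval_map]
    have hcl := MvPolynomial.eval₂_comp_left C.subtype (RingHom.id ↥C) s g
    have h0 : MvPolynomial.eval s g = 0 := hg s hs
    have : MvPolynomial.eval₂ C.subtype (⇑C.subtype ∘ s) g = C.subtype (MvPolynomial.eval s g) := by
      simpa [RingHom.comp_id, MvPolynomial.eval₂_id] using hcl.symm
    rw [show ((fun s : Fin n → ↥C => fun i => ((s i : K))) s : Fin n → K) = ⇑C.subtype ∘ s from rfl, this, h0]
    simp


theorem vanishingIdeal_zeroLocus_vanishingIdeal {k σ : Type*} [CommSemiring k]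
    (S : Set (σ → k)) :
    vanishingIdeal (zeroLocus ((vanishingIdeal S : Ideal (MvPolynomial σ k)) :
      Set (MvPolynomial σ k))) = vanishingIdeal S := by
  apply le_antisymm
  · intro f hf x hx
    exact hf x (fun g hg => hg x hx)
  · intro f hf x hx
    exact hx f hf

/-- Let `C ⊆ K` be a field extension and `n` a positive integer. For any
subset `S` of `Cⁿ`, viewed inside `Kⁿ`, the vanishing ideal of `S` in `K[X₁,…,Xₙ]` is the
ideal generated by the image of the vanishing ideal of `S` in `C[X₁,…,Xₙ]` under the
coefficient-inclusion homomorphism.  In particular, the Zariski closure of `S` in `Kⁿ` is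
defined over `C`. -/
theorem vanishingIdeal_of_points_over_subfield
    (K : Type*) [Field K] (C : Subfield K) (n : ℕ) (hn : 0 < n)
    (S : Set (Fin n → ↥C)) :
    vanishingIdeal ((fun s : Fin n → ↥C => fun i => ((s i : K))) '' S) =
      Ideal.span ((MvPolynomial.map C.subtype) ''
        ((vanishingIdeal S : Ideal (MvPolynomial (Fin n) ↥C)) : Set (MvPolynomial (Fin n) ↥C))) ∧
    ∃ T : Set (MvPolynomial (Fin n) ↥C),
      vanishingIdeal (zeroLocus
          ((vanishingIdeal ((fun s : Fin n → ↥C => fun i => ((s i : K))) '' S) :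
              Ideal (MvPolynomial (Fin n) K)) : Set (MvPolynomial (Fin n) K))) =
        Ideal.span ((MvPolynomial.map C.subtype) '' T) := by
  constructor
  · exact main_lemma K C n S
  · exact ⟨(vanishingIdeal S : Ideal (MvPolynomial (Fin n) ↥C)),
      by rw [vanishingIdeal_zeroLocus_vanishingIdeal]; exact main_lemma K C n S⟩
end

section
/- Let K be a field, C ⊆ K a subfield, and ℓ, n integers with 1 ≤ ℓ ≤ n. Let V ⊆ Kⁿ be a Zariski-closed set whose vanishing ideal is prime, and let X ⊆ V be Zariski dense in V. Suppose that every point of X has at least ℓ of its coordinates lying in C. Then there exist indices 1 ≤ i₁ < ⋯ < i_ℓ ≤ n such that the Zariski closure of the image of V under the coordinate projection (x₁,…,xₙ) ↦ (x_{i₁},…,x_{i_ℓ}) is defined over C. -/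
lemma mem_vanishingIdeal {k σ : Type*} [CommSemiring k] {S : Set (σ → k)}
    {f : MvPolynomial σ k} :
    f ∈ vanishingIdeal S ↔ ∀ x ∈ S, MvPolynomial.eval x f = 0 := Iff.rfl

lemma vanishingIdeal_anti {k σ : Type*} [CommSemiring k] {S S' : Set (σ → k)} (h : S ⊆ S') :
    vanishingIdeal S' ≤ vanishingIdeal S := fun _ hf x hx => hf x (h hx)

/-- If every point of `S` has all coordinates in the subfield `C`, then the vanishing ideal
of `S` is generated by polynomials with coefficients in `C`. -/
lemma vanishingIdeal_eq_span_of_coords_mem {K : Type*} [Field K] (C : Subfield K) {σ : Type*}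
    (S : Set (σ → K)) (hS : ∀ s ∈ S, ∀ j, s j ∈ C) :
    ∃ T : Set (MvPolynomial σ ↥C),
      vanishingIdeal S = Ideal.span ((MvPolynomial.map C.subtype) '' T) := by
  classical
  refine ⟨(MvPolynomial.map C.subtype) ⁻¹' (vanishingIdeal S : Set (MvPolynomial σ K)), ?_⟩
  apply le_antisymm
  · -- hard direction
    intro f hf
    set b := Module.Basis.ofVectorSpace ↥C K with hb
    set Φ : _ → MvPolynomial σ ↥C := fun i =>
      ∑ m ∈ f.support, MvPolynomial.monomial m (b.repr (MvPolynomial.coeff m f) i) with hΦ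
    have hcoeff : ∀ i m, MvPolynomial.coeff m (Φ i) = b.repr (MvPolynomial.coeff m f) i := by
      intro i m
      rw [hΦ]
      simp only [MvPolynomial.coeff_sum, MvPolynomial.coeff_monomial]
      rw [Finset.sum_ite_eq' f.support m (fun m' => b.repr (MvPolynomial.coeff m' f) i)]
      by_cases hm : m ∈ f.support
      · simp [hm]
      · simp [hm, MvPolynomial.notMem_support_iff.mp hm]
    set I : Finset _ := f.support.biUnion
      (fun m => (b.repr (MvPolynomial.coeff m f)).support) with hI
    have key : ∀ (c : K), (b.repr c).support ⊆ I →
        ∑ i ∈ I, ((b i : K) * ((b.repr c) i : K)) = c := by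
      intro c hsub
      have h1 : ∑ i ∈ (b.repr c).support, (((b.repr c) i : K) • (b i : K)) = c := by
        have := b.linearCombination_repr c
        rwa [Finsupp.linearCombination_apply, Finsupp.sum] at this
      have h2 : ∑ i ∈ I, (((b.repr c) i : K) • (b i : K)) = c :=
        (Finset.sum_subset hsub (fun i _ hi => by
          simp [Finsupp.notMem_support_iff.mp hi])).symm.trans h1
      refine Eq.trans (Finset.sum_congr rfl fun i _ => ?_) h2
      rw [smul_eq_mul]
      exact mul_comm _ _
    have hfeq : f = ∑ i ∈ I, MvPolynomial.C ((b i : K)) *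
        MvPolynomial.map C.subtype (Φ i) := by
      apply MvPolynomial.ext
      intro m
      rw [MvPolynomial.coeff_sum]
      simp only [MvPolynomial.coeff_C_mul, MvPolynomial.coeff_map, hcoeff]
      by_cases hm : m ∈ f.support
      · have hsub : (b.repr (MvPolynomial.coeff m f)).support ⊆ I :=
          fun i hi => Finset.mem_biUnion.mpr ⟨m, hm, hi⟩
        exact (key _ hsub).symm
      · have h0 : MvPolynomial.coeff m f = 0 := MvPolynomial.notMem_support_iff.mp hm
        simp [h0]
    have hΦmem : ∀ i ∈ I,
        MvPolynomial.map C.subtype (Φ i) ∈ vanishingIdeal S := by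
      intro i hi s hs
      set s' : σ → ↥C := fun j => ⟨s j, hS s hs j⟩ with hs'
      have hmap : ∀ g : MvPolynomial σ ↥C,
          MvPolynomial.eval s (MvPolynomial.map C.subtype g)
            = ((MvPolynomial.eval s' g : ↥C) : K) := by
        intro g
        rw [MvPolynomial.eval_map]
        have h2 := MvPolynomial.eval₂_comp_left C.subtype (RingHom.id ↥C) s' g
        rw [RingHom.comp_id] at h2
        have h3 : (⇑C.subtype ∘ s') = s := funext fun j => rfl
        rw [h3] at h2
        rw [← h2]
        rfl
      have h0 : MvPolynomial.eval s f = 0 := hf s hs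
      have hsum : ∑ j ∈ I, (MvPolynomial.eval s' (Φ j)) • (b j : K) = 0 := by
        have h4 := congrArg (MvPolynomial.eval s) hfeq
        rw [h0, map_sum] at h4
        simp only [map_mul, MvPolynomial.eval_C, hmap] at h4
        rw [eq_comm] at h4
        rw [← h4]
        refine Finset.sum_congr rfl fun j _ => ?_
        rw [Subring.smul_def, smul_eq_mul, mul_comm]
      have hlin : MvPolynomial.eval s' (Φ i) = 0 :=
        linearIndependent_iff'.mp b.linearIndependent I
          (fun j => MvPolynomial.eval s' (Φ j)) hsum i hi
      rw [hmap, hlin]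
      simp
    rw [hfeq]
    apply Ideal.sum_mem
    intro i hi
    apply Ideal.mul_mem_left
    exact Ideal.subset_span ⟨Φ i, hΦmem i hi, rfl⟩
  · rw [Ideal.span_le]
    rintro g ⟨t, ht, rfl⟩
    exact ht

/-- Let `K` be a field, `C ⊆ K` a subfield and `1 ≤ ℓ ≤ n`. Let `V ⊆ Kⁿ` be
Zariski closed with prime vanishing ideal, and let `X ⊆ V` be Zariski dense in `V`. If every
point of `X` has at least `ℓ` of its coordinates in `C`, then there are indices
`i₁ < ⋯ < i_ℓ` such that the Zariski closure of the image of `V` under the corresponding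
coordinate projection is defined over `C`. -/
theorem projection_defined_over_subfield_of_dense_constant_coordinates
    (K : Type*) [Field K] (C : Subfield K) (n ℓ : ℕ) (hℓ : 1 ≤ ℓ) (hn : ℓ ≤ n)
    (V : Set (Fin n → K))
    (hVclosed : zeroLocus ((vanishingIdeal V : Ideal (MvPolynomial (Fin n) K)) :
        Set (MvPolynomial (Fin n) K)) = V)
    (hVprime : (vanishingIdeal V).IsPrime)
    (X : Set (Fin n → K)) (hXV : X ⊆ V)
    (hXdense : zeroLocus ((vanishingIdeal X : Ideal (MvPolynomial (Fin n) K)) :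
        Set (MvPolynomial (Fin n) K)) = V)
    (hXcoords : ∀ x ∈ X, ∃ κ : Fin ℓ → Fin n, StrictMono κ ∧ ∀ j, x (κ j) ∈ C) :
    ∃ ι : Fin ℓ → Fin n, StrictMono ι ∧
      ∃ T : Set (MvPolynomial (Fin ℓ) ↥C),
        vanishingIdeal ((fun x : Fin n → K => x ∘ ι) '' V) =
          Ideal.span ((MvPolynomial.map C.subtype) '' T) := by
  classical
  have hIXV : vanishingIdeal X = vanishingIdeal V := by
    apply le_antisymm
    · intro f hf x hx
      rw [← hXdense] at hx
      exact hx f hf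
    · exact vanishingIdeal_anti hXV
  set Xk : (Fin ℓ → Fin n) → Set (Fin n → K) :=
    fun κ => {x ∈ X | StrictMono κ ∧ ∀ j, x (κ j) ∈ C} with hXkdef
  have hinf : (Finset.univ.inf fun κ => vanishingIdeal (Xk κ)) ≤ vanishingIdeal V := by
    rw [← hIXV]
    intro f hf x hx
    obtain ⟨κ, hκ1, hκ2⟩ := hXcoords x hx
    have hle : (Finset.univ.inf fun κ => vanishingIdeal (Xk κ)) ≤ vanishingIdeal (Xk κ) :=
      Finset.inf_le (Finset.mem_univ κ)
    have hmem : f ∈ vanishingIdeal (Xk κ) := hle hf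
    exact hmem x ⟨hx, hκ1, hκ2⟩
  obtain ⟨κ, -, hκle⟩ := (hVprime.inf_le').mp hinf
  have hXkV : Xk κ ⊆ V := fun x hx => hXV hx.1
  have hIk : vanishingIdeal (Xk κ) = vanishingIdeal V :=
    le_antisymm hκle (vanishingIdeal_anti hXkV)
  have hne : (Xk κ).Nonempty := by
    by_contra h
    rw [Set.not_nonempty_iff_eq_empty] at h
    have hone : (1 : MvPolynomial (Fin n) K) ∈ vanishingIdeal V := by
      rw [← hIk]
      intro x hx
      rw [h] at hx
      exact absurd hx (Set.notMem_empty x)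
    exact hVprime.ne_top ((Ideal.eq_top_iff_one _).mpr hone)
  obtain ⟨x0, hx0⟩ := hne
  refine ⟨κ, hx0.2.1, ?_⟩
  have hproj : vanishingIdeal ((fun x : Fin n → K => x ∘ κ) '' V)
      = vanishingIdeal ((fun x : Fin n → K => x ∘ κ) '' (Xk κ)) := by
    apply le_antisymm
    · exact vanishingIdeal_anti (Set.image_mono hXkV)
    · intro f hf y hy
      obtain ⟨x, hxV, rfl⟩ := hy
      have hren : MvPolynomial.rename κ f ∈ vanishingIdeal (Xk κ) := by
        intro x' hx'
        rw [MvPolynomial.eval_rename]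
        exact hf (x' ∘ κ) ⟨x', hx', rfl⟩
      rw [hIk] at hren
      have hx2 := hren x hxV
      rwa [MvPolynomial.eval_rename] at hx2
  obtain ⟨T, hT⟩ := vanishingIdeal_eq_span_of_coords_mem C
    ((fun x : Fin n → K => x ∘ κ) '' (Xk κ))
    (by rintro s ⟨x, hx, rfl⟩ j; exact hx.2.2 j)
  exact ⟨T, hproj.trans hT⟩
end

section
/- Let F ⊆ K be a field extension and p, q nonnegative integers. Let W ⊆ K^{p+q} be the zero locus of a set of polynomials in the variables Y₁,…,Y_p, Z₁,…,Z_q all of whose coefficients lie in F. Suppose (b, c) ∈ W is a point such that all coordinates of c = (c₁,…,c_q) lie in F and the coordinates b₁,…,b_p are algebraically independent over F. Then the entire slice K^p × {c} = {(y, c) : y ∈ K^p} is contained in W. -/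
/-- Let `F ⊆ K` be a field extension. Let `W ⊆ K^{p+q}` be the zero locus
of a set of polynomials in variables `Y₁,…,Y_p, Z₁,…,Z_q` with coefficients in `F`. If
`(b, c) ∈ W` is a point with all coordinates of `c` in `F` and the coordinates of `b`
algebraically independent over `F`, then the whole slice `K^p × {c}` is contained in `W`. -/
theorem slice_subset_of_algIndep_point
    (K : Type*) [Field K] (F : Subfield K) (p q : ℕ)
    (T : Set (MvPolynomial (Fin p ⊕ Fin q) ↥F))
    (W : Set ((Fin p ⊕ Fin q) → K))
    (hW : W = zeroLocus ((MvPolynomial.map F.subtype) '' T))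
    (b : Fin p → K) (c : Fin q → K)
    (hbc : Sum.elim b c ∈ W)
    (hc : ∀ i, c i ∈ F)
    (hb : AlgebraicIndependent ↥F b) :
    ∀ y : Fin p → K, Sum.elim y c ∈ W := by
  subst hW
  intro y f' hf'
  obtain ⟨f, hfT, rfl⟩ := hf'
  set u : (Fin p ⊕ Fin q) → MvPolynomial (Fin p) ↥F :=
    Sum.elim MvPolynomial.X (fun i => MvPolynomial.C ⟨c i, hc i⟩) with hu
  set g : MvPolynomial (Fin p) ↥F := MvPolynomial.aeval u f with hg
  have key : ∀ v : Fin p → K,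
      MvPolynomial.aeval (R := ↥F) v g
        = MvPolynomial.eval (Sum.elim v c) (MvPolynomial.map F.subtype f) := by
    intro v
    have comp : (MvPolynomial.aeval (R := ↥F) v).comp (MvPolynomial.aeval u)
        = MvPolynomial.aeval (Sum.elim v c) := by
      apply MvPolynomial.algHom_ext
      rintro (i | j) <;> simp [hu] <;> rfl
    have h1 : MvPolynomial.aeval (R := ↥F) v g
        = MvPolynomial.aeval (Sum.elim v c) f := by
      rw [hg, ← comp]; rfl
    rw [h1, MvPolynomial.aeval_def, ← MvPolynomial.eval_map]
    rfl
  have hg0 : g = 0 := by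
    apply hb
    have := hbc (MvPolynomial.map F.subtype f) ⟨f, hfT, rfl⟩
    rw [map_zero, key b, this]
  rw [← key y, hg0, map_zero]
end

section
/- Let K be an uncountable algebraically closed field and n ≥ 1. Let P be a prime ideal of K[X₁,…,Xₙ] and let (f_i)_{i∈ℕ} be a countable family of polynomials in K[X₁,…,Xₙ] with f_i ∉ P for every i. Then there exists a point x in the zero locus of P such that f_i(x) ≠ 0 for every i ∈ ℕ. -/
open MvPolynomial Cardinal

set_option maxHeartbeats 1000000
set_option synthInstance.maxHeartbeats 400000

lemma exists_map_eq_of_coeff_mem {K : Type*} [Field K] {σ : Type*} (k : Subfield K)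
    (p : MvPolynomial σ K) (h : ∀ m, p.coeff m ∈ k) :
    ∃ q : MvPolynomial σ k, MvPolynomial.map (algebraMap k K) q = p := by
  have hp : p ∈ (MvPolynomial.map (algebraMap k K) :
      MvPolynomial σ k →+* MvPolynomial σ K).range := by
    rw [← support_sum_monomial_coeff p]
    refine Subring.sum_mem _ fun m _ => ?_
    exact ⟨monomial m ⟨p.coeff m, h m⟩, by rw [map_monomial]; rfl⟩
  obtain ⟨q, hq⟩ := hp
  exact ⟨q, hq⟩


universe u

lemma exists_ringHom_fixing_subfield {K : Type u} [Field K] [IsAlgClosed K] [Uncountable K]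
    (k : Subfield K) [Countable k] (F : Type u) [Field F] [Countable F] [Algebra k F] :
    ∃ Φ : F →+* K, ∀ a : k, Φ (algebraMap k F a) = (a : K) := by
  obtain ⟨s, hs⟩ := exists_isTranscendenceBasis (↥k) F
  obtain ⟨t, ht⟩ := exists_isTranscendenceBasis (↥k) K
  have hst : #s ≤ #t := by
    have h1 : #s ≤ ℵ₀ := Cardinal.mk_le_aleph0
    have h2 : #K = #t := Cardinal.lift_inj.mp <|
      IsAlgClosed.cardinal_eq_cardinal_transcendence_basis_of_aleph0_lt _ ht
        Cardinal.mk_le_aleph0 (Cardinal.aleph0_lt_mk (α := K))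
    exact h1.trans ((Cardinal.aleph0_lt_mk (α := K)).le.trans h2.le)
  obtain ⟨j⟩ : Nonempty (↥s ↪ ↥t) := Cardinal.le_def _ _ |>.mp hst
  set u : ↥s → K := (fun i : ↥t => (i : K)) ∘ j with hu_def
  have hu : AlgebraicIndependent (↥k) u := ht.1.comp j j.injective
  set A := Algebra.adjoin (↥k) (Set.range ((↑) : s → F)) with hA
  let eA : MvPolynomial s (↥k) ≃ₐ[↥k] A := hs.1.aevalEquiv
  let ψA : (↥A) →ₐ[↥k] K := (MvPolynomial.aeval u).comp (eA.symm : ↥A →ₐ[↥k] MvPolynomial s ↥k)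
  have hψA : Function.Injective ψA := by
    have : Function.Injective (MvPolynomial.aeval u : MvPolynomial s ↥k →ₐ[↥k] K) := hu
    exact this.comp eA.symm.injective
  letI : Algebra (↥A) K := ψA.toRingHom.toAlgebra
  haveI : Module.IsTorsionFree (↥A) K := NoZeroSMulDivisors.iff_algebraMap_injective.mpr hψA
  haveI : Module.IsTorsionFree (↥A) F :=
    NoZeroSMulDivisors.iff_algebraMap_injective.mpr
      (Subtype.val_injective : Function.Injective ((↑) : ↥A → F))
  haveI : Algebra.IsAlgebraic (↥A) F := hs.isAlgebraic
  let Φ : F →ₐ[↥A] K := IsAlgClosed.lift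
  refine ⟨(Φ : F →+* K), fun a => ?_⟩
  have h1 : algebraMap (↥k) F a = algebraMap (↥A) F (algebraMap (↥k) (↥A) a) :=
    (IsScalarTower.algebraMap_apply (↥k) (↥A) F a)
  rw [h1]
  show Φ (algebraMap (↥A) F (algebraMap (↥k) (↥A) a)) = (a : K)
  rw [AlgHom.commutes]
  show ψA (algebraMap (↥k) (↥A) a) = (a : K)
  rw [AlgHom.commutes]
  rfl

/-- Variant for a countable domain over the subfield. -/
lemma exists_injective_ringHom_fixing_subfield {K : Type u} [Field K] [IsAlgClosed K]
    [Uncountable K] (k : Subfield K) [Countable k] (R : Type u) [CommRing R] [IsDomain R]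
    [Algebra k R] [Countable R] :
    ∃ Φ : R →+* K, Function.Injective Φ ∧ ∀ a : k, Φ (algebraMap k R a) = (a : K) := by
  haveI : Countable (FractionRing R) := by
    have hsurj : Function.Surjective (fun p : R × R =>
        algebraMap R (FractionRing R) p.1 / algebraMap R (FractionRing R) p.2) := by
      intro z
      obtain ⟨a, b, -, hab⟩ := IsFractionRing.div_surjective (A := R) (K := FractionRing R) z
      exact ⟨(a, b), hab⟩
    exact hsurj.countable
  letI : Algebra ↥k (FractionRing R) :=
    ((algebraMap R (FractionRing R)).comp (algebraMap ↥k R)).toAlgebra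
  obtain ⟨Φ', hΦ'⟩ := exists_ringHom_fixing_subfield k (FractionRing R)
  refine ⟨Φ'.comp (algebraMap R (FractionRing R)),
    Φ'.injective.comp (IsFractionRing.injective R (FractionRing R)), fun a => ?_⟩
  have : Φ' (algebraMap ↥k (FractionRing R) a) = (a : K) := hΦ' a
  exact this

/-- Over an uncountable algebraically closed field `K`, if `P` is a prime
ideal of `K[X₁,…,Xₙ]` and `(fᵢ)` is a countable family of polynomials none of which lies
in `P`, then there is a point of the zero locus of `P` at which every `fᵢ` is nonzero. -/
theorem exists_point_avoiding_countably_many_hypersurfaces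
    (K : Type*) [Field K] [IsAlgClosed K] [Uncountable K]
    (n : ℕ) (hn : 1 ≤ n)
    (P : Ideal (MvPolynomial (Fin n) K)) (hP : P.IsPrime)
    (f : ℕ → MvPolynomial (Fin n) K) (hf : ∀ i, f i ∉ P) :
    ∃ x ∈ zeroLocus ((P : Set (MvPolynomial (Fin n) K))),
      ∀ i : ℕ, MvPolynomial.eval x (f i) ≠ 0 := by
  classical
  haveI := hP
  obtain ⟨G, hG⟩ : P.FG := IsNoetherian.noetherian P
  -- the countable set of coefficients
  set C : Set K := (⋃ i : ℕ, Set.range fun m => (f i).coeff m) ∪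
      (⋃ g ∈ G, Set.range fun m => MvPolynomial.coeff m g) with hC
  have hCc : C.Countable := by
    refine Set.Countable.union (Set.countable_iUnion fun i => Set.countable_range _) ?_
    exact Set.Countable.biUnion G.countable_toSet fun g _ => Set.countable_range _
  set k : Subfield K := Subfield.closure C with hk
  haveI : Countable k := by
    haveI := hCc.to_subtype
    refine Cardinal.mk_le_aleph0_iff.mp ?_
    exact (Subfield.cardinalMk_closure_le_max C).trans
      (max_le Cardinal.mk_le_aleph0 le_rfl)
  set φ : MvPolynomial (Fin n) ↥k →+* MvPolynomial (Fin n) K :=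
    (MvPolynomial.map (algebraMap ↥k K)) with hφ
  have hfmem : ∀ i m, (f i).coeff m ∈ k := fun i m =>
    Subfield.subset_closure (Or.inl (Set.mem_iUnion.mpr ⟨i, ⟨m, rfl⟩⟩))
  choose f₀ hf₀ using fun i => exists_map_eq_of_coeff_mem k (f i) (hfmem i)
  have hgmem : ∀ g ∈ G, ∀ m, MvPolynomial.coeff m g ∈ k := fun g hg m =>
    Subfield.subset_closure (Or.inr (Set.mem_biUnion hg ⟨m, rfl⟩))
  set P₀ : Ideal (MvPolynomial (Fin n) ↥k) := P.comap φ with hP₀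
  haveI : P₀.IsPrime := Ideal.IsPrime.comap φ
  haveI : Countable (MvPolynomial (Fin n) ↥k) := by
    refine Cardinal.mk_le_aleph0_iff.mp (MvPolynomial.cardinalMk_le_max_lift.trans ?_)
    refine max_le (max_le ?_ ?_) le_rfl <;> rw [Cardinal.lift_le_aleph0] <;>
      exact Cardinal.mk_le_aleph0
  haveI : Countable (MvPolynomial (Fin n) ↥k ⧸ P₀) :=
    Function.Surjective.countable Ideal.Quotient.mk_surjective
  obtain ⟨Φ, hΦinj, hΦ⟩ :=
    exists_injective_ringHom_fixing_subfield k (MvPolynomial (Fin n) ↥k ⧸ P₀)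
  set ψ : MvPolynomial (Fin n) ↥k →+* K := Φ.comp (Ideal.Quotient.mk P₀) with hψ
  have hker : ∀ q, ψ q = 0 ↔ q ∈ P₀ := by
    intro q
    rw [← Ideal.Quotient.eq_zero_iff_mem]
    constructor
    · intro h
      apply hΦinj
      rw [map_zero]; exact h
    · intro h
      simp [hψ, h]
  have hCa : ∀ a : ↥k, ψ (MvPolynomial.C a) = (a : K) := by
    intro a
    have h1 : (Ideal.Quotient.mk P₀) (MvPolynomial.C a) =
        algebraMap ↥k (MvPolynomial (Fin n) ↥k ⧸ P₀) a := rfl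
    show Φ ((Ideal.Quotient.mk P₀) (MvPolynomial.C a)) = (a : K)
    rw [h1, hΦ a]
  set x : Fin n → K := fun i => ψ (MvPolynomial.X i) with hx
  have hkey : ∀ q, MvPolynomial.eval x (φ q) = ψ q := by
    have hcomp : (MvPolynomial.eval x : MvPolynomial (Fin n) K →+* K).comp φ = ψ := by
      apply MvPolynomial.ringHom_ext
      · intro a
        simp only [RingHom.comp_apply, hφ, MvPolynomial.map_C, MvPolynomial.eval_C, hCa a]
        rfl
      · intro i
        simp only [RingHom.comp_apply, hφ, MvPolynomial.map_X, MvPolynomial.eval_X]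
        rfl
    exact fun q => RingHom.congr_fun hcomp q
  refine ⟨x, ?_, ?_⟩
  · intro h hhP
    have hle : Ideal.span (↑G : Set (MvPolynomial (Fin n) K)) ≤
        RingHom.ker (MvPolynomial.eval x : MvPolynomial (Fin n) K →+* K) := by
      rw [Ideal.span_le]
      intro g hg
      obtain ⟨q, hq⟩ := exists_map_eq_of_coeff_mem k g (hgmem g hg)
      have hq0 : q ∈ P₀ := by
        rw [hP₀, Ideal.mem_comap, hq, ← hG]
        exact Ideal.subset_span hg
      have : MvPolynomial.eval x g = 0 := by
        rw [← hq, hkey q]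
        exact (hker q).mpr hq0
      simpa [RingHom.mem_ker] using this
    have : h ∈ RingHom.ker (MvPolynomial.eval x : MvPolynomial (Fin n) K →+* K) := by
      apply hle
      rw [hG]
      exact hhP
    simpa [RingHom.mem_ker] using this
  · intro i hi
    have h1 : ψ (f₀ i) = 0 := by rw [← hkey, hf₀ i]; exact hi
    have h2 : f₀ i ∈ P₀ := (hker _).mp h1
    rw [hP₀, Ideal.mem_comap, hf₀ i] at h2
    exact hf i h2
end

section
/- Let V ⊆ ℂⁿ be a Zariski-closed set whose vanishing ideal is prime and which contains at least two distinct points, and let (Y_i)_{i∈ℕ} be a countable family of nonempty subsets of ℂⁿ. Then there exist a vector a ∈ ℂⁿ with a ≠ 0 and a scalar a₀ ∈ ℂ such that the affine hyperplane L = {x ∈ ℂⁿ : a₁x₁ + ⋯ + aₙxₙ = a₀} satisfies: V ∩ L ≠ ∅, V is not contained in L, and for every i ∈ ℕ the set Y_i is not contained in L. -/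
open Polynomial in
/-- If `t` is an element of a `ℂ`-algebra domain which is not in the image of `ℂ`,
then no nonzero polynomial over `ℂ` annihilates `t`. -/
lemma aux_aeval_ne_zero {R : Type*} [CommRing R] [IsDomain R] [Algebra ℂ R]
    (t : R) (ht : ∀ c : ℂ, t ≠ algebraMap ℂ R c) {q : ℂ[X]} (hq : q ≠ 0) :
    Polynomial.aeval t q ≠ 0 := by
  have hsplit : q.roots.card = q.natDegree :=
    (Polynomial.splits_iff_card_roots).1 (IsAlgClosed.splits q)
  have hfact := Polynomial.C_leadingCoeff_mul_prod_multiset_X_sub_C hsplit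
  rw [← hfact]
  rw [map_mul, Polynomial.aeval_C, map_multiset_prod]
  intro h
  rcases mul_eq_zero.1 h with h1 | h1
  · exact hq (Polynomial.leadingCoeff_eq_zero.1
      ((map_eq_zero_iff _ ((algebraMap ℂ R).injective)).1 h1))
  · rw [Multiset.prod_eq_zero_iff] at h1
    simp only [Multiset.map_map, Multiset.mem_map] at h1
    obtain ⟨r, _, hr⟩ := h1
    simp only [Function.comp_apply, map_sub, Polynomial.aeval_X, Polynomial.aeval_C] at hr
    exact ht r (sub_eq_zero.1 hr)

/-- In a `ℂ`-algebra domain of countable dimension, for a transcendental-looking element `t`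
(one not in `ℂ·1`), the set of `c` such that `t - c` is invertible is countable.
This is the classical "partial fractions" argument. -/
lemma aux_countable_units {R : Type} [CommRing R] [IsDomain R] [Algebra ℂ R]
    (hrank : Module.rank ℂ R ≤ Cardinal.aleph0)
    (t : R) (ht : ∀ c : ℂ, t ≠ algebraMap ℂ R c) :
    {c : ℂ | IsUnit (t - algebraMap ℂ R c)}.Countable := by
  set S := {c : ℂ | IsUnit (t - algebraMap ℂ R c)} with hS
  -- the family of inverses
  have hinv : ∀ c : S, ∃ u : R, (t - algebraMap ℂ R (c : ℂ)) * u = 1 := by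
    rintro ⟨c, hc⟩
    exact ⟨↑(hc.unit⁻¹), by simp⟩
  choose u hu using hinv
  have hli : LinearIndependent ℂ u := by
    rw [linearIndependent_iff']
    intro s g hsum i₀ hi₀
    -- multiply the relation by the product of all (t - c)
    set P : R := ∏ i ∈ s, (t - algebraMap ℂ R (i : ℂ)) with hP
    have hmul : ∀ i ∈ s, u i * P = ∏ k ∈ s.erase i, (t - algebraMap ℂ R (k : ℂ)) := by
      intro i hi
      rw [hP, ← Finset.mul_prod_erase s _ hi, ← mul_assoc, mul_comm (u i),
        hu i, one_mul]
    have hrel : ∑ i ∈ s, g i • ∏ k ∈ s.erase i, (t - algebraMap ℂ R (k : ℂ)) = 0 := by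
      calc ∑ i ∈ s, g i • ∏ k ∈ s.erase i, (t - algebraMap ℂ R (k : ℂ))
          = ∑ i ∈ s, g i • (u i * P) := by
            refine Finset.sum_congr rfl fun i hi => by rw [hmul i hi]
        _ = (∑ i ∈ s, g i • u i) * P := by
            rw [Finset.sum_mul]
            exact Finset.sum_congr rfl fun i _ => (smul_mul_assoc _ _ _).symm
        _ = 0 := by rw [hsum, zero_mul]
    -- the corresponding polynomial
    set q : Polynomial ℂ :=
      ∑ i ∈ s, Polynomial.C (g i) *
        ∏ k ∈ s.erase i, (Polynomial.X - Polynomial.C (k : ℂ)) with hq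
    have haeval : Polynomial.aeval t q = 0 := by
      rw [hq, map_sum]
      rw [← hrel]
      refine Finset.sum_congr rfl fun i hi => ?_
      rw [map_mul, map_prod, Polynomial.aeval_C, ← Algebra.smul_def]
      congr 1
      refine Finset.prod_congr rfl fun k _ => ?_
      rw [map_sub, Polynomial.aeval_X, Polynomial.aeval_C]
    have hq0 : q = 0 := by
      by_contra hne
      exact aux_aeval_ne_zero t ht hne haeval
    -- evaluate q at i₀
    have heval := congrArg (Polynomial.eval (i₀ : ℂ)) hq0
    rw [hq, Polynomial.eval_zero, Polynomial.eval_finset_sum] at heval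
    simp only [Polynomial.eval_mul, Polynomial.eval_C, Polynomial.eval_prod,
      Polynomial.eval_sub, Polynomial.eval_X] at heval
    rw [Finset.sum_eq_single i₀ (fun i hi hne => ?_) (fun h => absurd hi₀ h)] at heval
    · have hprod : ∏ k ∈ s.erase i₀, ((i₀ : ℂ) - (k : ℂ)) ≠ 0 := by
        rw [Finset.prod_ne_zero_iff]
        intro k hk
        have : k ≠ i₀ := (Finset.mem_erase.1 hk).1
        exact sub_ne_zero.2 fun h => this (Subtype.ext h.symm)
      exact (mul_eq_zero.1 heval).resolve_right hprod
    · have : i₀ ∈ s.erase i := Finset.mem_erase.2 ⟨hne.symm, hi₀⟩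
      rw [Finset.prod_eq_zero this (by ring), mul_zero]
  have hcard : Cardinal.mk S ≤ Cardinal.aleph0 := hli.cardinal_le_rank.trans hrank
  rw [Cardinal.mk_le_aleph0_iff] at hcard
  exact Set.countable_coe_iff.1 hcard

/-- Sum against a standard basis vector picks out a coordinate. -/
lemma aux_sum_single_mul {n : ℕ} (j : Fin n) (w : Fin n → ℂ) :
    ∑ k, (Pi.single j 1 : Fin n → ℂ) k * w k = w j := by
  rw [Finset.sum_eq_single j]
  · rw [Pi.single_eq_same, one_mul]
  · intro k _ hk
    rw [Pi.single_eq_of_ne hk, zero_mul]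
  · intro h
    exact absurd (Finset.mem_univ j) h

/-- Let `V ⊆ ℂⁿ` be Zariski closed with prime vanishing ideal and at least
two points, and let `(Yᵢ)` be a countable family of nonempty subsets of `ℂⁿ`. Then there is
an affine hyperplane `L = {x | a₁x₁ + ⋯ + aₙxₙ = a₀}` (with `a ≠ 0`) meeting `V`, not
containing `V`, and not containing any `Yᵢ`. -/
theorem generic_hyperplane_section
    (n : ℕ) (V : Set (Fin n → ℂ))
    (hVclosed : zeroLocus ((vanishingIdeal V : Ideal (MvPolynomial (Fin n) ℂ)) :
        Set (MvPolynomial (Fin n) ℂ)) = V)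
    (hVprime : (vanishingIdeal V).IsPrime)
    (hVtwo : ∃ x ∈ V, ∃ y ∈ V, x ≠ y)
    (Y : ℕ → Set (Fin n → ℂ)) (hY : ∀ i, (Y i).Nonempty) :
    ∃ (a : Fin n → ℂ) (a₀ : ℂ), a ≠ 0 ∧
      (V ∩ {x : Fin n → ℂ | ∑ j, a j * x j = a₀}).Nonempty ∧
      ¬ V ⊆ {x : Fin n → ℂ | ∑ j, a j * x j = a₀} ∧
      ∀ i : ℕ, ¬ Y i ⊆ {x : Fin n → ℂ | ∑ j, a j * x j = a₀} := by
  obtain ⟨x, hxV, y, hyV, hxy⟩ := hVtwo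
  obtain ⟨j, hj⟩ : ∃ j, x j ≠ y j := by
    by_contra h
    push_neg at h
    exact hxy (funext h)
  set I : Ideal (MvPolynomial (Fin n) ℂ) := vanishingIdeal V with hI
  haveI : I.IsPrime := hVprime
  haveI : Uncountable ℂ := Complex.ofReal_injective.uncountable
  set R := MvPolynomial (Fin n) ℂ ⧸ I with hR
  have hmemI : ∀ f : MvPolynomial (Fin n) ℂ, f ∈ I ↔ ∀ w ∈ V, MvPolynomial.eval w f = 0 :=
    fun f => Iff.rfl
  set t : R := Ideal.Quotient.mk I (MvPolynomial.X j) with htdef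
  have halg : ∀ c : ℂ, algebraMap ℂ R c = Ideal.Quotient.mk I (MvPolynomial.C c) := fun c => rfl
  have ht : ∀ c : ℂ, t ≠ algebraMap ℂ R c := by
    intro c hc
    rw [htdef, halg, Ideal.Quotient.eq] at hc
    have h1 := (hmemI _).1 hc x hxV
    have h2 := (hmemI _).1 hc y hyV
    simp only [map_sub, MvPolynomial.eval_X, MvPolynomial.eval_C, sub_eq_zero] at h1 h2
    exact hj (h1.trans h2.symm)
  have hrank : Module.rank ℂ R ≤ Cardinal.aleph0 := by
    have hsurj : Function.Surjective (Ideal.Quotient.mkₐ ℂ I).toLinearMap :=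
      Ideal.Quotient.mk_surjective
    refine (LinearMap.rank_le_of_surjective _ hsurj).trans ?_
    rw [← (MvPolynomial.basisMonomials (Fin n) ℂ).mk_eq_rank'']
    exact Cardinal.mk_le_aleph0
  have hUcount := aux_countable_units hrank t ht
  -- choose a point of each Y i
  choose z hz using hY
  -- choose a value c avoiding the bad countable set
  obtain ⟨c, hc⟩ : ∃ c : ℂ, c ∉ {c : ℂ | IsUnit (t - algebraMap ℂ R c)} ∪
      Set.range (fun i => z i j) := by
    by_contra h
    push_neg at h
    have hcnt : ({c : ℂ | IsUnit (t - algebraMap ℂ R c)} ∪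
        Set.range (fun i => z i j)).Countable :=
      hUcount.union (Set.countable_range _)
    exact Set.not_countable_univ (Set.Countable.mono (fun w _ => h w) hcnt)
  rw [Set.mem_union, not_or] at hc
  obtain ⟨hcU, hcR⟩ := hc
  -- from non-invertibility get a point b ∈ V with b j = c
  have hnu : ¬ IsUnit (t - algebraMap ℂ R c) := hcU
  obtain ⟨M, hM, hle⟩ := Ideal.exists_le_maximal (Ideal.span {t - algebraMap ℂ R c})
    (fun htop => hnu (Ideal.span_singleton_eq_top.1 htop))
  have htM : t - algebraMap ℂ R c ∈ M := hle (Ideal.subset_span rfl)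
  haveI : M.IsMaximal := hM
  have hM' : (M.comap (Ideal.Quotient.mk I)).IsMaximal :=
    Ideal.comap_isMaximal_of_surjective _ Ideal.Quotient.mk_surjective
  obtain ⟨b, hb⟩ := (MvPolynomial.isMaximal_iff_eq_vanishingIdeal_singleton).1 hM'
  have hbV : b ∈ V := by
    rw [← hVclosed]
    intro f hf
    have hfM : f ∈ M.comap (Ideal.Quotient.mk I) := by
      simp only [Ideal.mem_comap]
      rw [Ideal.Quotient.eq_zero_iff_mem.2 hf]
      exact M.zero_mem
    rw [hb] at hfM
    exact (MvPolynomial.mem_vanishingIdeal_singleton_iff b f).1 hfM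
  have hbj : b j = c := by
    have hXc : MvPolynomial.X j - MvPolynomial.C c ∈ M.comap (Ideal.Quotient.mk I) := by
      simp only [Ideal.mem_comap, map_sub]
      exact htM
    rw [hb] at hXc
    have := (MvPolynomial.mem_vanishingIdeal_singleton_iff b _).1 hXc
    simpa [sub_eq_zero] using this
  -- the hyperplane
  refine ⟨Pi.single j 1, c, ?_, ?_, ?_, ?_⟩
  · intro h
    have := congrFun h j
    rw [Pi.single_eq_same] at this
    exact one_ne_zero this
  · refine ⟨b, hbV, ?_⟩
    show ∑ k, (Pi.single j 1 : Fin n → ℂ) k * b k = c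
    rw [aux_sum_single_mul]
    exact hbj
  · intro hsub
    have hx' : ∑ k, (Pi.single j 1 : Fin n → ℂ) k * x k = c := hsub hxV
    have hy' : ∑ k, (Pi.single j 1 : Fin n → ℂ) k * y k = c := hsub hyV
    rw [aux_sum_single_mul] at hx' hy'
    exact hj (hx'.trans hy'.symm)
  · intro i hsub
    have := hsub (hz i)
    rw [Set.mem_setOf_eq, aux_sum_single_mul] at this
    exact hcR ⟨i, this⟩
end
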